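/- Let S be a hereditarily closed set of pregames. If for every position G ∈ S, every pair (G^L, G^R) consisting of a left option and a right option of G satisfies the F1 property or the F2 property, then every position G ∈ S is a number (numeric). -/

import Mathlib

universe u

namespace SetTheory

/-- Pre-games, as in Mathlib (Dec 2024), which no longer provides them. -/
inductive PGame : Type (u + 1)
  | mk : ∀ α β : Type u, (α → PGame) → (β → PGame) → PGame

namespace PGame

def LeftMoves : PGame → Type u
  | mk l _ _ _ => l

def RightMoves : PGame → Type u
  | mk _ r _ _ => r

def moveLeft : ∀ g : PGame, LeftMoves g → PGame
  | mk _ _ L _ => L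

def moveRight : ∀ g : PGame, RightMoves g → PGame
  | mk _ _ _ R => R

/-- The pair (x ≤ y, x ⧏ y), defined by simultaneous recursion. -/
noncomputable def leLf (x : PGame.{u}) : PGame.{u} → Prop × Prop :=
  PGame.rec (motive := fun _ => PGame.{u} → Prop × Prop)
    (fun _ _ xL xR IHxl IHxr y =>
      PGame.rec (motive := fun _ => Prop × Prop)
        (fun yl yr yL yR IHyl IHyr =>
          ((∀ i, (IHxl i (mk yl yr yL yR)).2) ∧ ∀ j, (IHyr j).2,
            (∃ i, (IHyl i).1) ∨ ∃ j, (IHxr j (mk yl yr yL yR)).1)) y) x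

instance le : LE PGame.{u} :=
  ⟨fun x y => (leLf x y).1⟩

instance lt : LT PGame.{u} :=
  ⟨fun x y => x ≤ y ∧ ¬y ≤ x⟩

def Numeric : PGame.{u} → Prop
  | ⟨_, _, L, R⟩ => (∀ i j, L i < R j) ∧ (∀ i, Numeric (L i)) ∧ ∀ i, Numeric (R i)

end PGame

end SetTheory

open SetTheory PGame

/-- A set of pregames is hereditarily closed (HCR) if it is closed under taking
left and right options. -/
def HCR (S : Set PGame) : Prop :=
  ∀ G ∈ S, (∀ i, G.moveLeft i ∈ S) ∧ ∀ j, G.moveRight j ∈ S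

/-- The pair `(xL, xR)` satisfies the F1 property if some left option of `xR` is `≥ xL`,
or some right option of `xL` is `≤ xR`. -/
def F1 (xL xR : PGame) : Prop :=
  (∃ i, xL ≤ xR.moveLeft i) ∨ ∃ j, xL.moveRight j ≤ xR

/-- The pair `(xL, xR)` satisfies the F2 property if some right option of `xL` is `≤`
some left option of `xR`. -/
def F2 (xL xR : PGame) : Prop :=
  ∃ (j : xL.RightMoves) (i : xR.LeftMoves), xL.moveRight j ≤ xR.moveLeft i

namespace SetTheory
namespace PGame

theorem moveRecOn {C : PGame.{u} → Prop} (x : PGame.{u})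
    (IH : ∀ y : PGame.{u}, (∀ i, C (y.moveLeft i)) → (∀ j, C (y.moveRight j)) → C y) : C x := by
  induction x with
  | mk xl xr xL xR ihl ihr => exact IH _ ihl ihr

def lfAux (x y : PGame.{u}) : Prop := (leLf x y).2

theorem le_iff_aux (x y : PGame.{u}) :
    x ≤ y ↔ (∀ i, lfAux (x.moveLeft i) y) ∧ ∀ j, lfAux x (y.moveRight j) := by
  cases x; cases y; exact Iff.rfl

theorem lf_iff_aux (x y : PGame.{u}) :
    lfAux x y ↔ (∃ i, x ≤ y.moveLeft i) ∨ ∃ j, x.moveRight j ≤ y := by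
  cases x; cases y; exact Iff.rfl

theorem lfAux_iff_not_le (x y : PGame.{u}) :
    (lfAux x y ↔ ¬ y ≤ x) ∧ (lfAux y x ↔ ¬ x ≤ y) := by
  induction x generalizing y with
  | mk xl xr xL xR ihxl ihxr =>
    induction y with
    | mk yl yr yL yR ihyl ihyr =>
      constructor
      · rw [lf_iff_aux, le_iff_aux]
        constructor
        · rintro (⟨i, hi⟩ | ⟨j, hj⟩) ⟨h1, h2⟩
          · exact ((ihyl i).2.1 (h1 i)) hi
          · exact ((ihxr j _).2.1 (h2 j)) hj
        · intro hn
          by_contra hc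
          push_neg at hc
          apply hn
          refine ⟨fun i => ?_, fun j => ?_⟩
          · exact (ihyl i).2.2 (hc.1 i)
          · exact (ihxr j _).2.2 (hc.2 j)
      · rw [lf_iff_aux, le_iff_aux]
        constructor
        · rintro (⟨i, hi⟩ | ⟨j, hj⟩) ⟨h1, h2⟩
          · exact ((ihxl i _).1.1 (h1 i)) hi
          · exact ((ihyr j).1.1 (h2 j)) hj
        · intro hn
          by_contra hc
          push_neg at hc
          apply hn
          refine ⟨fun i => ?_, fun j => ?_⟩
          · exact (ihxl i _).1.2 (hc.1 i)
          · exact (ihyr j).1.2 (hc.2 j)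

theorem le_iff' (x y : PGame.{u}) :
    x ≤ y ↔ (∀ i, ¬ y ≤ x.moveLeft i) ∧ ∀ j, ¬ y.moveRight j ≤ x := by
  rw [le_iff_aux]
  simp only [(lfAux_iff_not_le _ _).1]

theorem le_refl' (x : PGame.{u}) : x ≤ x := by
  induction x with
  | mk xl xr xL xR ihl ihr =>
    rw [le_iff_aux]
    refine ⟨fun i => ?_, fun j => ?_⟩
    · rw [lf_iff_aux]; exact Or.inl ⟨i, ihl i⟩
    · rw [lf_iff_aux]; exact Or.inr ⟨j, ihr j⟩

theorem le_trans_aux (x y z : PGame.{u}) :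
    (x ≤ y → y ≤ z → x ≤ z) ∧ (y ≤ z → z ≤ x → y ≤ x) ∧ (z ≤ x → x ≤ y → z ≤ y) := by
  induction x generalizing y z with
  | mk xl xr xL xR ihxl ihxr =>
    induction y generalizing z with
    | mk yl yr yL yR ihyl ihyr =>
      induction z with
      | mk zl zr zL zR ihzl ihzr =>
        refine ⟨fun hxy hyz => ?_, fun hyz hzx => ?_, fun hzx hxy => ?_⟩
        · rw [le_iff'] at hxy hyz ⊢
          refine ⟨fun i h => ?_, fun j h => ?_⟩
          · exact hxy.1 i ((ihxl i _ _).2.1 ((le_iff' _ _).2 hyz) h)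
          · exact hyz.2 j ((ihzr j).2.2 h ((le_iff' _ _).2 hxy))
        · rw [le_iff'] at hyz hzx ⊢
          refine ⟨fun i h => ?_, fun j h => ?_⟩
          · exact hyz.1 i ((ihyl i _).2.2 ((le_iff' _ _).2 hzx) h)
          · exact hzx.2 j ((ihxr j _ _).1 h ((le_iff' _ _).2 hyz))
        · rw [le_iff'] at hzx hxy ⊢
          refine ⟨fun i h => ?_, fun j h => ?_⟩
          · exact hzx.1 i ((ihzl i).1 ((le_iff' _ _).2 hxy) h)
          · exact hxy.2 j ((ihyr j _).2.1 h ((le_iff' _ _).2 hzx))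

instance preorder' : Preorder PGame.{u} where
  le := (· ≤ ·)
  lt := (· < ·)
  le_refl := le_refl'
  le_trans := fun x y z => (le_trans_aux x y z).1
  lt_iff_le_not_ge := fun _ _ => Iff.rfl

theorem numeric_def {x : PGame.{u}} :
    Numeric x ↔ (∀ i j, x.moveLeft i < x.moveRight j) ∧ (∀ i, Numeric (x.moveLeft i)) ∧
      ∀ j, Numeric (x.moveRight j) := by
  cases x; exact Iff.rfl

theorem not_le_moveLeft (x : PGame.{u}) (i : x.LeftMoves) : ¬ x ≤ x.moveLeft i :=
  ((le_iff' x x).1 (le_refl' x)).1 i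

theorem not_moveRight_le (x : PGame.{u}) (j : x.RightMoves) : ¬ x.moveRight j ≤ x :=
  ((le_iff' x x).1 (le_refl' x)).2 j

theorem Numeric.le_aux {x : PGame.{u}} (o : Numeric x) :
    (∀ i, x.moveLeft i ≤ x) ∧ ∀ j, x ≤ x.moveRight j := by
  induction x with
  | mk xl xr xL xR ihl ihr =>
    obtain ⟨h1, h2, h3⟩ := numeric_def.1 o
    refine ⟨fun i => ?_, fun j => ?_⟩
    · rw [le_iff']
      refine ⟨fun i' h => ?_, fun j => (h1 i j).2⟩
      exact not_le_moveLeft _ i (h.trans ((ihl i (h2 i)).1 i'))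
    · rw [le_iff']
      refine ⟨fun i => (h1 i j).2, fun j' h => ?_⟩
      exact not_moveRight_le _ j (((ihr j (h3 j)).2 j').trans h)

theorem Numeric.moveLeft_lt {x : PGame.{u}} (o : Numeric x) (i : x.LeftMoves) :
    x.moveLeft i < x :=
  ⟨o.le_aux.1 i, not_le_moveLeft x i⟩

theorem Numeric.lt_moveRight {x : PGame.{u}} (o : Numeric x) (j : x.RightMoves) :
    x < x.moveRight j :=
  ⟨o.le_aux.2 j, not_moveRight_le x j⟩

end PGame
end SetTheory

theorem stmt_1 (S : Set PGame) (hS : HCR S)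
    (h : ∀ G ∈ S, ∀ (i : G.LeftMoves) (j : G.RightMoves),
      F1 (G.moveLeft i) (G.moveRight j) ∨ F2 (G.moveLeft i) (G.moveRight j)) :
    ∀ G ∈ S, G.Numeric := by
  intro G
  induction G using PGame.moveRecOn with
  | _ x ihL ihR =>
    intro hx
    have hL : ∀ i, (x.moveLeft i).Numeric := fun i => ihL i ((hS x hx).1 i)
    have hR : ∀ j, (x.moveRight j).Numeric := fun j => ihR j ((hS x hx).2 j)
    refine PGame.numeric_def.mpr ⟨?_, hL, hR⟩
    intro i j
    rcases h x hx i j with (⟨k, hk⟩ | ⟨k, hk⟩) | ⟨a, b, hab⟩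
    · exact hk.trans_lt ((hR j).moveLeft_lt k)
    · exact ((hL i).lt_moveRight k).trans_le hk
    · exact (((hL i).lt_moveRight a).trans_le hab).trans ((hR j).moveLeft_lt b)
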